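/- arXiv:0711.3072 — 5 statements merged into one kernel-verified Lean document; each statement's English description precedes it below -/
import Mathlib

section
/- Let x : [0,∞) → ℝⁿ be continuous with x(0) = x₀, and suppose for every s ≥ 0, sup{|x(t; x₀)| : t ≥ 0, |x₀| ≤ s} < ∞ (uniform boundedness over bounded initial sets). Then there exist a continuous positive function μ : [0,∞) → (0,∞) and a function ã of class K∞ (continuous, strictly increasing, ã(0)=0, unbounded) such that |x(t; x₀)| ≤ μ(t)·ã(|x₀|) for all t ≥ 0 and all x₀ ∈ ℝⁿ. -/
/-!
Put `a₀(s) = sup {‖x(t; x₀)‖ / (1 + t) : t ≥ 0, ‖x₀‖ ≤ s}`, so that `‖x(t; x₀)‖ ≤ (1 + t) a₀(‖x₀‖)`.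
It is finite by uniform boundedness, nondecreasing, and `a₀(s) → 0 = a₀(0)` as `s → 0⁺`: on a
compact time window `[0, T]` small initial data stay small because `x(·; 0) = 0` and `x` is
continuous, while for `t ≥ T` the uniform bound is damped by `1 / (1 + T)`. Averaging over
dilations, `s ↦ ∫₁² a₀(s u) du` is a continuous nondecreasing majorant of `a₀` vanishing at `0`;
adding `s` makes it of class `K∞`, and `μ(t) = 1 + |t|`.
-/

open Set Filter Topology MeasureTheory

noncomputable def dilationAverage (f : ℝ → ℝ) (s : ℝ) : ℝ :=
  ∫ u in (1 : ℝ)..2, f (s * u)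

@[simp]
lemma dilationAverage_zero (f : ℝ → ℝ) : dilationAverage f 0 = f 0 := by
  norm_num [dilationAverage]

namespace Monotone

variable {f : ℝ → ℝ}

lemma intervalIntegrable_comp_mul_left (hf : Monotone f) (s a b : ℝ) :
    IntervalIntegrable (fun u => f (s * u)) volume a b := by
  rcases le_total 0 s with hs | hs
  · exact (hf.comp fun u v huv => mul_le_mul_of_nonneg_left huv hs).intervalIntegrable
  · exact (hf.comp_antitone fun u v huv => mul_le_mul_of_nonpos_left huv hs).intervalIntegrable

lemma monotone_dilationAverage (hf : Monotone f) : Monotone (dilationAverage f) :=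
  fun s s' hss' => intervalIntegral.integral_mono_on one_le_two
    (hf.intervalIntegrable_comp_mul_left s 1 2) (hf.intervalIntegrable_comp_mul_left s' 1 2)
    fun u hu => hf (mul_le_mul_of_nonneg_right hss' (by linarith [hu.1]))

lemma dilationAverage_mem_uIcc (hf : Monotone f) (s : ℝ) :
    dilationAverage f s ∈ uIcc (f s) (f (2 * s)) := by
  have hmaps : ∀ u ∈ Icc (1 : ℝ) 2, f (s * u) ∈ uIcc (f s) (f (2 * s)) := fun u hu =>
    hf.mapsTo_uIcc <| by
      have := image_const_mul_uIcc s 1 2 ▸ mem_image_of_mem (s * ·) (Icc_subset_uIcc hu)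
      rwa [mul_one, mul_comm s 2] at this
  have hconst : ∀ c : ℝ, ∫ _ in (1 : ℝ)..2, c = c := fun c => by norm_num
  constructor
  · calc min (f s) (f (2 * s)) = ∫ _ in (1 : ℝ)..2, min (f s) (f (2 * s)) := (hconst _).symm
      _ ≤ dilationAverage f s := intervalIntegral.integral_mono_on one_le_two
          intervalIntegrable_const (hf.intervalIntegrable_comp_mul_left s 1 2)
          fun u hu => (hmaps u hu).1
  · calc dilationAverage f s ≤ ∫ _ in (1 : ℝ)..2, max (f s) (f (2 * s)) :=
          intervalIntegral.integral_mono_on one_le_two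
            (hf.intervalIntegrable_comp_mul_left s 1 2) intervalIntegrable_const
            fun u hu => (hmaps u hu).2
      _ = max (f s) (f (2 * s)) := hconst _

lemma continuousAt_dilationAverage_zero (hf : Monotone f) (hf0 : ContinuousAt f 0) :
    ContinuousAt (dilationAverage f) 0 := by
  have hf0' : Tendsto (fun s => f (2 * s)) (𝓝 0) (𝓝 (f 0)) :=
    hf0.tendsto.comp ((continuous_const_mul 2).tendsto' 0 0 (mul_zero 2))
  rw [ContinuousAt, dilationAverage_zero]
  exact tendsto_of_tendsto_of_tendsto_of_le_of_le (by simpa using hf0.tendsto.min hf0')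
    (by simpa using hf0.tendsto.max hf0') (fun s => (hf.dilationAverage_mem_uIcc s).1)
    (fun s => (hf.dilationAverage_mem_uIcc s).2)

/-- Away from `0`, the average is a difference quotient of a primitive of `f`. -/
lemma continuousAt_dilationAverage_of_ne_zero (hf : Monotone f) {s₀ : ℝ} (hs₀ : s₀ ≠ 0) :
    ContinuousAt (dilationAverage f) s₀ := by
  have hint : ∀ a b, IntervalIntegrable f volume a b := fun _ _ => hf.intervalIntegrable
  have hprim := intervalIntegral.continuous_primitive hint 0
  have hquot : ContinuousAt
      (fun s => s⁻¹ * ((∫ u in (0 : ℝ)..s * 2, f u) - ∫ u in (0 : ℝ)..s * 1, f u)) s₀ :=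
    (continuousAt_inv₀ hs₀).mul <|
      ((hprim.comp (continuous_mul_const 2)).sub
        (hprim.comp (continuous_mul_const 1))).continuousAt
  refine hquot.congr ((eventually_ne_nhds hs₀).mono fun s hs => ?_)
  rw [dilationAverage, intervalIntegral.integral_comp_mul_left f hs,
    ← intervalIntegral.integral_interval_sub_left (hint 0 (s * 2)) (hint 0 (s * 1)), smul_eq_mul]

lemma continuous_dilationAverage (hf : Monotone f) (hf0 : ContinuousAt f 0) :
    Continuous (dilationAverage f) :=
  continuous_iff_continuousAt.2 fun s => (eq_or_ne s 0).elim
    (fun hs => hs ▸ hf.continuousAt_dilationAverage_zero hf0)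
    hf.continuousAt_dilationAverage_of_ne_zero

end Monotone

lemma exists_continuous_monotone_majorant {f : ℝ → ℝ} (hf : MonotoneOn f (Ici 0))
    (hf0 : ContinuousWithinAt f (Ici 0) 0) :
    ∃ g : ℝ → ℝ, Continuous g ∧ Monotone g ∧ g 0 = f 0 ∧ ∀ s, 0 ≤ s → f s ≤ g s := by
  set f₀ : ℝ → ℝ := fun s => f (max s 0)
  have hf₀ : Monotone f₀ := fun s s' hss' =>
    hf (le_max_right s 0) (le_max_right s' 0) (max_le_max hss' le_rfl)
  have hf₀0 : ContinuousAt f₀ 0 := by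
    rw [← continuousWithinAt_univ]
    exact hf0.comp_of_eq (continuous_id.max continuous_const).continuousWithinAt
      (fun s _ => le_max_right s 0) (max_self 0)
  refine ⟨dilationAverage f₀, hf₀.continuous_dilationAverage hf₀0, hf₀.monotone_dilationAverage,
    by simp [f₀], fun s hs => ?_⟩
  have hmem := hf₀.dilationAverage_mem_uIcc s
  rw [uIcc_of_le (hf₀ (by linarith))] at hmem
  simpa [f₀, hs] using hmem.1

section TimeWeighted

open Metric

variable {E F : Type*} [NormedAddCommGroup E] [NormedAddCommGroup F]

def UniformlyBoundedOnBalls (x : ℝ → E → F) : Prop :=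
  ∀ s : ℝ, 0 ≤ s → ∃ C : ℝ, ∀ t, 0 ≤ t → ∀ x₀, ‖x₀‖ ≤ s → ‖x t x₀‖ ≤ C

def timeWeightedNorms (x : ℝ → E → F) (s : ℝ) : Set ℝ :=
  (fun p : ℝ × E => ‖x p.1 p.2‖ / (1 + p.1)) '' (Ici 0 ×ˢ closedBall 0 s)

noncomputable def timeWeightedSup (x : ℝ → E → F) (s : ℝ) : ℝ :=
  sSup (timeWeightedNorms x s)

variable {x : ℝ → E → F}

lemma nonempty_timeWeightedNorms {s : ℝ} (hs : 0 ≤ s) : (timeWeightedNorms x s).Nonempty :=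
  Set.Nonempty.image _ (nonempty_Ici.prod (nonempty_closedBall.2 hs))

lemma UniformlyBoundedOnBalls.bddAbove_timeWeightedNorms (hbdd : UniformlyBoundedOnBalls x)
    (s : ℝ) : BddAbove (timeWeightedNorms x s) := by
  obtain ⟨C, hC⟩ := hbdd (max s 0) (le_max_right s 0)
  refine ⟨C, ?_⟩
  rintro _ ⟨⟨t, x₀⟩, ⟨ht, hx₀⟩, rfl⟩
  rw [mem_Ici] at ht
  rw [mem_closedBall_zero_iff] at hx₀
  exact (div_le_self (norm_nonneg _) (by linarith)).trans
    (hC t ht x₀ (hx₀.trans (le_max_left s 0)))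

lemma UniformlyBoundedOnBalls.norm_div_le_timeWeightedSup (hbdd : UniformlyBoundedOnBalls x)
    {t : ℝ} (ht : 0 ≤ t) (x₀ : E) : ‖x t x₀‖ / (1 + t) ≤ timeWeightedSup x ‖x₀‖ :=
  le_csSup (hbdd.bddAbove_timeWeightedNorms _) ⟨(t, x₀), ⟨ht, by simp⟩, rfl⟩

lemma UniformlyBoundedOnBalls.monotoneOn_timeWeightedSup (hbdd : UniformlyBoundedOnBalls x) :
    MonotoneOn (timeWeightedSup x) (Ici 0) := fun _ hs _ _ hss' =>
  csSup_le_csSup (hbdd.bddAbove_timeWeightedNorms _) (nonempty_timeWeightedNorms hs)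
    (image_mono (prod_mono le_rfl (closedBall_subset_closedBall hss')))

lemma timeWeightedSup_le {s ε : ℝ} (hs : 0 ≤ s)
    (h : ∀ t, 0 ≤ t → ∀ x₀ : E, ‖x₀‖ ≤ s → ‖x t x₀‖ / (1 + t) ≤ ε) :
    timeWeightedSup x s ≤ ε :=
  csSup_le (nonempty_timeWeightedNorms hs) <| by
    rintro _ ⟨⟨t, x₀⟩, ⟨ht, hx₀⟩, rfl⟩
    exact h t ht x₀ (mem_closedBall_zero_iff.1 hx₀)

lemma timeWeightedSup_zero (hbdd : UniformlyBoundedOnBalls x) (hzero : ∀ t, 0 ≤ t → x t 0 = 0) :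
    timeWeightedSup x 0 = 0 := by
  refine le_antisymm (timeWeightedSup_le le_rfl fun t ht x₀ hx₀ => ?_) ?_
  · rw [norm_le_zero_iff.1 hx₀, hzero t ht, norm_zero, zero_div]
  · simpa [hzero 0 le_rfl] using hbdd.norm_div_le_timeWeightedSup le_rfl (0 : E)

lemma eventually_forall_Icc_norm_lt (hcont : Continuous fun p : ℝ × E => x p.1 p.2)
    (hzero : ∀ t, 0 ≤ t → x t 0 = 0) (T : ℝ) {ε : ℝ} (hε : 0 < ε) :
    ∀ᶠ x₀ in 𝓝 (0 : E), ∀ t ∈ Icc 0 T, ‖x t x₀‖ < ε :=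
  isCompact_Icc.eventually_forall_of_forall_eventually fun t ht =>
    (hcont.comp continuous_swap).norm.continuousAt.eventually_lt continuousAt_const
      (by simpa [hzero t ht.1] using hε)

lemma eventually_forall_norm_div_le (hcont : Continuous fun p : ℝ × E => x p.1 p.2)
    (hzero : ∀ t, 0 ≤ t → x t 0 = 0) (hbdd : UniformlyBoundedOnBalls x) {ε : ℝ} (hε : 0 < ε) :
    ∀ᶠ x₀ in 𝓝 (0 : E), ∀ t, 0 ≤ t → ‖x t x₀‖ / (1 + t) ≤ ε := by
  obtain ⟨C, hC⟩ := hbdd 1 zero_le_one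
  filter_upwards [eventually_forall_Icc_norm_lt hcont hzero (C / ε) hε,
    closedBall_mem_nhds 0 one_pos] with x₀ hsmall hx₀ t ht
  rw [mem_closedBall_zero_iff] at hx₀
  rcases le_total t (C / ε) with hT | hT
  · exact (div_le_self (norm_nonneg _) (by linarith)).trans (hsmall t ⟨ht, hT⟩).le
  · rw [div_le_iff₀ (by linarith)]
    have : C ≤ ε * t := by rwa [div_le_iff₀' hε] at hT
    nlinarith [hC t ht x₀ hx₀]

lemma continuousWithinAt_timeWeightedSup_zero (hcont : Continuous fun p : ℝ × E => x p.1 p.2)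
    (hzero : ∀ t, 0 ≤ t → x t 0 = 0) (hbdd : UniformlyBoundedOnBalls x) :
    ContinuousWithinAt (timeWeightedSup x) (Ici 0) 0 := by
  rw [ContinuousWithinAt, timeWeightedSup_zero hbdd hzero, Metric.tendsto_nhdsWithin_nhds]
  intro ε hε
  obtain ⟨δ, hδ, hsmall⟩ :=
    Metric.eventually_nhds_iff.1 (eventually_forall_norm_div_le hcont hzero hbdd (half_pos hε))
  refine ⟨δ, hδ, fun s (hs : 0 ≤ s) hsδ => ?_⟩
  rw [Real.dist_eq, sub_zero, abs_of_nonneg hs] at hsδ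
  have hle : timeWeightedSup x s ≤ ε / 2 := timeWeightedSup_le hs fun t ht x₀ hx₀ =>
    hsmall (by rw [dist_zero_right]; linarith) t ht
  have hnonneg : 0 ≤ timeWeightedSup x s := by
    simpa [timeWeightedSup_zero hbdd hzero] using
      hbdd.monotoneOn_timeWeightedSup self_mem_Ici hs hs
  rw [Real.dist_eq, sub_zero, abs_of_nonneg hnonneg]
  linarith

end TimeWeighted

theorem uniform_bound_factorization_general
    {n : ℕ} (x : ℝ → EuclideanSpace ℝ (Fin n) → EuclideanSpace ℝ (Fin n))
    (hcont : Continuous fun p : ℝ × EuclideanSpace ℝ (Fin n) => x p.1 p.2)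
    (hzero : ∀ t, 0 ≤ t → x t 0 = 0)
    (hbdd : ∀ s : ℝ, 0 ≤ s →
      ∃ C : ℝ, ∀ t, 0 ≤ t → ∀ x₀, ‖x₀‖ ≤ s → ‖x t x₀‖ ≤ C) :
    ∃ μ : ℝ → ℝ, Continuous μ ∧ (∀ t, 0 < μ t) ∧
      ∃ a : ℝ → ℝ, Continuous a ∧ StrictMonoOn a (Ici 0) ∧ a 0 = 0 ∧
        Tendsto a atTop atTop ∧
        ∀ t, 0 ≤ t → ∀ x₀, ‖x t x₀‖ ≤ μ t * a ‖x₀‖ := by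
  have hbdd : UniformlyBoundedOnBalls x := hbdd
  obtain ⟨g, hg_cont, hg_mono, hg0, hle_g⟩ := exists_continuous_monotone_majorant
    hbdd.monotoneOn_timeWeightedSup (continuousWithinAt_timeWeightedSup_zero hcont hzero hbdd)
  rw [timeWeightedSup_zero hbdd hzero] at hg0
  refine ⟨fun t => 1 + |t|, by fun_prop, fun t => by positivity, fun s => s + g s,
    continuous_id.add hg_cont, (strictMono_id.add_monotone hg_mono).strictMonoOn _, by simp [hg0],
    tendsto_atTop_add_right_of_le' _ 0 tendsto_id
      ((eventually_ge_atTop 0).mono fun s hs => hg0 ▸ hg_mono hs), fun t ht x₀ => ?_⟩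
  have hx := hbdd.norm_div_le_timeWeightedSup ht x₀
  rw [div_le_iff₀ (by positivity)] at hx
  calc ‖x t x₀‖ ≤ timeWeightedSup x ‖x₀‖ * (1 + t) := hx
    _ ≤ (‖x₀‖ + g ‖x₀‖) * (1 + t) := by
        gcongr
        linarith [norm_nonneg x₀, hle_g _ (norm_nonneg x₀)]
    _ = (1 + |t|) * (‖x₀‖ + g ‖x₀‖) := by rw [abs_of_nonneg ht, mul_comm]

theorem uniform_bound_factorization
    {n : ℕ} (x : ℝ → EuclideanSpace ℝ (Fin n) → EuclideanSpace ℝ (Fin n))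
    (hcont : Continuous fun p : ℝ × EuclideanSpace ℝ (Fin n) => x p.1 p.2)
    (hinit : ∀ x₀, x 0 x₀ = x₀)
    (hzero : ∀ t, 0 ≤ t → x t 0 = 0)
    (hbdd : ∀ s : ℝ, 0 ≤ s →
      ∃ C : ℝ, ∀ t, 0 ≤ t → ∀ x₀, ‖x₀‖ ≤ s → ‖x t x₀‖ ≤ C) :
    ∃ μ : ℝ → ℝ, Continuous μ ∧ (∀ t, 0 < μ t) ∧
      ∃ a : ℝ → ℝ, Continuous a ∧ StrictMonoOn a (Ici 0) ∧ a 0 = 0 ∧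
        Tendsto a atTop atTop ∧
        ∀ t, 0 ≤ t → ∀ x₀, ‖x t x₀‖ ≤ μ t * a ‖x₀‖ :=
  uniform_bound_factorization_general x hcont hzero hbdd
end

section
/- With V(x) = (1/2)x₁² + (1/2)(x₂+5x₁)² and feedback k̃(x) = −421x₁ − 89x₂ + (5/2)x₁³, for all z, x ∈ ℝ², all d₁,d₂ ∈ [−1,1]: ∇V(z)·f(d,z,k̃(x)) ≤ −(3/2)z₁² − 2(z₂+5z₁)² + (421² + (225/16)(z₁² + x₁²)²)|z₁−x₁|² + 89²|z₂−x₂|², where f(d,z,u) = (d₁z₁ + (3/2)d₂z₁² − (1/2)z₁³ + z₂, u). -/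
/-!
Split the held feedback as `k̃(x) = k̃(z) + (k̃(x) - k̃(z))`. With `y = z₂ + 5 z₁`, the feedback
`k̃(z)` cancels the cross term `z₁ y` exactly, leaving `-z₁⁴/2 - 5 z₁² - 84 y²` plus the
disturbance terms, which are linear in `d` and absorbed by Young's inequality down to
`-(3/2) z₁² - (11/4) y²`. The sampling error is `y (421 e₁ + 89 e₂ - (5/2) Q e₁)` with
`e = z - x` and `Q = z₁² + z₁ x₁ + x₁²`; Young's inequality costs `(3/4) y²` and
`Q² ≤ (9/4) (z₁² + x₁²)²` gives the stated penalty.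
-/

open Set

noncomputable def jetFeedback (x₁ x₂ : ℝ) : ℝ := -421 * x₁ - 89 * x₂ + 5 / 2 * x₁ ^ 3

lemma mul_two_mul_le_sq_add_sq {d : ℝ} (hd : d ∈ Icc (-1 : ℝ) 1) (a b : ℝ) :
    d * (2 * a * b) ≤ a ^ 2 + b ^ 2 := by
  have hplus : 0 ≤ (1 + d) * (a - b) ^ 2 := mul_nonneg (by linarith [hd.1]) (sq_nonneg _)
  have hminus : 0 ≤ (1 - d) * (a + b) ^ 2 := mul_nonneg (by linarith [hd.2]) (sq_nonneg _)
  linear_combination (hplus + hminus) / 2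

lemma mul_le_sq_div_four_add_sq (y c : ℝ) : y * c ≤ y ^ 2 / 4 + c ^ 2 := by
  linear_combination two_mul_le_add_sq (y / 2) c

lemma sq_add_mul_add_sq_sq_le (a b : ℝ) :
    (a ^ 2 + a * b + b ^ 2) ^ 2 ≤ 9 / 4 * (a ^ 2 + b ^ 2) ^ 2 := by
  have hnonneg : 0 ≤ a ^ 2 + a * b + b ^ 2 := by nlinarith [sq_nonneg (a + b / 2), sq_nonneg b]
  have hle : a ^ 2 + a * b + b ^ 2 ≤ 3 / 2 * (a ^ 2 + b ^ 2) := by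
    linear_combination (sq_nonneg (a - b)) / 2
  calc (a ^ 2 + a * b + b ^ 2) ^ 2 ≤ (3 / 2 * (a ^ 2 + b ^ 2)) ^ 2 := by gcongr
    _ = 9 / 4 * (a ^ 2 + b ^ 2) ^ 2 := by ring

lemma jetFeedback_lyapunov_decrease (z₁ z₂ d₁ d₂ : ℝ) (hd₁ : d₁ ∈ Icc (-1 : ℝ) 1)
    (hd₂ : d₂ ∈ Icc (-1 : ℝ) 1) :
    (z₁ + 5 * (z₂ + 5 * z₁)) * (d₁ * z₁ + 3 / 2 * d₂ * z₁ ^ 2 - 1 / 2 * z₁ ^ 3 + z₂)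
      + (z₂ + 5 * z₁) * jetFeedback z₁ z₂
    ≤ -(3 / 2) * z₁ ^ 2 - 11 / 4 * (z₂ + 5 * z₁) ^ 2 := by
  set y := z₂ + 5 * z₁
  have hlin : d₁ * z₁ ^ 2 ≤ z₁ ^ 2 := mul_le_of_le_one_left (sq_nonneg z₁) hd₁.2
  have hcube := mul_two_mul_le_sq_add_sq hd₂ (z₁ ^ 2 / 2) (3 / 2 * z₁)
  have hcross := mul_two_mul_le_sq_add_sq hd₁ (z₁ / 2) (5 * y)
  have hquad := mul_two_mul_le_sq_add_sq hd₂ (z₁ ^ 2 / 2) (15 / 2 * y)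
  unfold jetFeedback
  linear_combination hlin + hcube + hcross + hquad

lemma jetFeedback_sampling_error (y z₁ z₂ x₁ x₂ : ℝ) :
    y * (jetFeedback x₁ x₂ - jetFeedback z₁ z₂)
    ≤ 3 / 4 * y ^ 2 + (421 ^ 2 + 225 / 16 * (z₁ ^ 2 + x₁ ^ 2) ^ 2) * (z₁ - x₁) ^ 2
      + 89 ^ 2 * (z₂ - x₂) ^ 2 := by
  set Q := z₁ ^ 2 + z₁ * x₁ + x₁ ^ 2
  have hdiff : jetFeedback x₁ x₂ - jetFeedback z₁ z₂
      = 421 * (z₁ - x₁) + 89 * (z₂ - x₂) - 5 / 2 * Q * (z₁ - x₁) := by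
    unfold jetFeedback; ring
  have hQ : (5 / 2 * Q * (z₁ - x₁)) ^ 2 ≤ 225 / 16 * (z₁ ^ 2 + x₁ ^ 2) ^ 2 * (z₁ - x₁) ^ 2 := by
    calc (5 / 2 * Q * (z₁ - x₁)) ^ 2 = 25 / 4 * Q ^ 2 * (z₁ - x₁) ^ 2 := by ring
      _ ≤ 25 / 4 * (9 / 4 * (z₁ ^ 2 + x₁ ^ 2) ^ 2) * (z₁ - x₁) ^ 2 := by
        gcongr; exact sq_add_mul_add_sq_sq_le z₁ x₁
      _ = _ := by ring
  rw [hdiff]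
  linear_combination mul_le_sq_div_four_add_sq y (421 * (z₁ - x₁))
    + mul_le_sq_div_four_add_sq y (89 * (z₂ - x₂))
    + mul_le_sq_div_four_add_sq y (-(5 / 2 * Q * (z₁ - x₁))) + hQ

theorem jet_engine_emulation_estimate
    (z₁ z₂ x₁ x₂ d₁ d₂ : ℝ) (hd₁ : d₁ ∈ Set.Icc (-1 : ℝ) 1) (hd₂ : d₂ ∈ Set.Icc (-1 : ℝ) 1) :
    (z₁ + 5 * (z₂ + 5 * z₁)) * (d₁ * z₁ + 3 / 2 * d₂ * z₁ ^ 2 - 1 / 2 * z₁ ^ 3 + z₂)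
      + (z₂ + 5 * z₁) * (-421 * x₁ - 89 * x₂ + 5 / 2 * x₁ ^ 3)
    ≤ -(3 / 2) * z₁ ^ 2 - 2 * (z₂ + 5 * z₁) ^ 2
      + (421 ^ 2 + 225 / 16 * (z₁ ^ 2 + x₁ ^ 2) ^ 2) * (z₁ - x₁) ^ 2
      + 89 ^ 2 * (z₂ - x₂) ^ 2 := by
  have hsplit : -421 * x₁ - 89 * x₂ + 5 / 2 * x₁ ^ 3
      = jetFeedback z₁ z₂ + (jetFeedback x₁ x₂ - jetFeedback z₁ z₂) := by
    unfold jetFeedback; ring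
  rw [hsplit]
  linear_combination jetFeedback_lyapunov_decrease z₁ z₂ d₁ d₂ hd₁ hd₂
    + jetFeedback_sampling_error (z₂ + 5 * z₁) z₁ z₂ x₁ x₂
end

section
/- Let a : ℝ → ℝ be locally Lipschitz with a(0) = 0 and a(x) > 0 for all x ≠ 0, and let L > 0 satisfy a(x) ≤ Lx for all x ∈ [0,2]. Fix x₀ ∈ (0,2) and consider the solution of ẋ = a(x) − (L+1)x₀ with x(0) = x₀ on [0, 1/(L+1)]. Then 0 ≤ x(t) ≤ (1−t)x₀ for all t ∈ [0, 1/(L+1)]; in particular x(t) ∈ (−∞, 2) and |x(t)| ≤ e^{−t}|x₀| on this interval. -/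
open Set

/-!
Since `a ≥ 0`, the drift `a (x t) - (L + 1) x₀` is at least `-(L + 1) x₀`, which keeps `x`
nonnegative up to time `1 / (L + 1)`. Whenever `x` reaches the level `x₀` the drift is at most
`a x₀ - (L + 1) x₀ ≤ -x₀ < 0`, so `x` never exceeds `x₀`. Hence `x` stays in `[0, x₀] ⊆ [0, 2]`,
where `a y ≤ L y ≤ L x₀` bounds the drift by `-x₀`, giving `x t ≤ (1 - t) x₀ ≤ e⁻ᵗ x₀`.
-/

section DerivBounds

variable {f f' : ℝ → ℝ} {a b : ℝ}

theorem image_sub_le_mul_sub_of_hasDerivAt_le (hf : ∀ t ∈ Icc a b, HasDerivAt f (f' t) t)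
    {C : ℝ} (hC : ∀ t ∈ Ico a b, f' t ≤ C) : ∀ t ∈ Icc a b, f t - f a ≤ C * (t - a) := by
  have hB : ∀ t, HasDerivAt (fun s => f a + C * (s - a)) C t := fun t => by
    simpa using ((hasDerivAt_id t).sub_const a).const_mul C |>.const_add (f a)
  intro t ht
  have := image_le_of_deriv_right_le_deriv_boundary
    (fun s hs => (hf s hs).continuousAt.continuousWithinAt)
    (fun s hs => (hf s (Ico_subset_Icc_self hs)).hasDerivWithinAt) (by simp)
    (fun s _ => (hB s).continuousAt.continuousWithinAt) (fun s _ => (hB s).hasDerivWithinAt) hC ht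
  linarith

theorem mul_sub_le_image_sub_of_le_hasDerivAt (hf : ∀ t ∈ Icc a b, HasDerivAt f (f' t) t)
    {C : ℝ} (hC : ∀ t ∈ Ico a b, C ≤ f' t) : ∀ t ∈ Icc a b, C * (t - a) ≤ f t - f a := by
  intro t ht
  have := image_sub_le_mul_sub_of_hasDerivAt_le (fun s hs => (hf s hs).neg)
    (fun s hs => neg_le_neg (hC s hs)) t ht
  simp only [Pi.neg_apply] at this
  linarith

theorem image_le_of_hasDerivAt_neg_of_eq (hf : ∀ t ∈ Icc a b, HasDerivAt f (f' t) t)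
    {C : ℝ} (ha : f a ≤ C) (hC : ∀ t ∈ Ico a b, f t = C → f' t < 0) :
    ∀ t ∈ Icc a b, f t ≤ C := fun _ ht =>
  image_le_of_deriv_right_lt_deriv_boundary'
    (fun s hs => (hf s hs).continuousAt.continuousWithinAt)
    (fun s hs => (hf s (Ico_subset_Icc_self hs)).hasDerivWithinAt) ha continuousOn_const
    (fun _ _ => hasDerivWithinAt_const _ _ C) hC ht

end DerivBounds

theorem scalar_sampling_interval_estimate_general
    (a : ℝ → ℝ) (ha0 : a 0 = 0)
    (hapos : ∀ y : ℝ, y ≠ 0 → 0 < a y)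
    (L : ℝ) (hL : 0 < L) (hLip : ∀ y ∈ Icc (0 : ℝ) 2, a y ≤ L * y)
    (x₀ : ℝ) (hx₀ : x₀ ∈ Ioo (0 : ℝ) 2)
    (x : ℝ → ℝ) (hinit : x 0 = x₀)
    (hsol : ∀ t ∈ Icc (0 : ℝ) (1 / (L + 1)),
      HasDerivAt x (a (x t) - (L + 1) * x₀) t) :
    ∀ t ∈ Icc (0 : ℝ) (1 / (L + 1)),
      0 ≤ x t ∧ x t ≤ (1 - t) * x₀ ∧ x t < 2 ∧ |x t| ≤ Real.exp (-t) * |x₀| := by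
  obtain ⟨hx₀_pos, hx₀_lt⟩ := hx₀
  have ha_nonneg (y : ℝ) : 0 ≤ a y := by
    rcases eq_or_ne y 0 with rfl | hy
    · exact ha0.ge
    · exact (hapos y hy).le
  have hx_nonneg : ∀ t ∈ Icc (0 : ℝ) (1 / (L + 1)), 0 ≤ x t := by
    intro t ht
    have hdrop := mul_sub_le_image_sub_of_le_hasDerivAt hsol
      (C := -((L + 1) * x₀)) (fun s _ => by linarith [ha_nonneg (x s)]) t ht
    have htT : (L + 1) * t ≤ 1 := (le_div_iff₀' (by linarith)).1 ht.2
    nlinarith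
  have hx_le : ∀ t ∈ Icc (0 : ℝ) (1 / (L + 1)), x t ≤ x₀ :=
    image_le_of_hasDerivAt_neg_of_eq hsol hinit.le fun s _ hs => by
      rw [hs]
      linarith [hLip x₀ ⟨hx₀_pos.le, hx₀_lt.le⟩]
  have hx_upper : ∀ t ∈ Icc (0 : ℝ) (1 / (L + 1)), x t ≤ (1 - t) * x₀ := by
    intro t ht
    have hdrift : ∀ s ∈ Ico (0 : ℝ) (1 / (L + 1)), a (x s) - (L + 1) * x₀ ≤ -x₀ := by
      intro s hs
      have hs := Ico_subset_Icc_self hs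
      have hLx := hLip (x s) ⟨hx_nonneg s hs, (hx_le s hs).trans hx₀_lt.le⟩
      nlinarith [mul_le_mul_of_nonneg_left (hx_le s hs) hL.le]
    have := image_sub_le_mul_sub_of_hasDerivAt_le hsol hdrift t ht
    linarith
  intro t ht
  have hupper := hx_upper t ht
  refine ⟨hx_nonneg t ht, hupper, by nlinarith [ht.1], ?_⟩
  rw [abs_of_nonneg (hx_nonneg t ht), abs_of_pos hx₀_pos]
  calc x t ≤ (1 - t) * x₀ := hupper
    _ ≤ Real.exp (-t) * x₀ := by
      gcongr
      linarith [Real.add_one_le_exp (-t)]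

theorem scalar_sampling_interval_estimate
    (a : ℝ → ℝ) (ha : LocallyLipschitz a) (ha0 : a 0 = 0)
    (hapos : ∀ y : ℝ, y ≠ 0 → 0 < a y)
    (L : ℝ) (hL : 0 < L) (hLip : ∀ y ∈ Icc (0 : ℝ) 2, a y ≤ L * y)
    (x₀ : ℝ) (hx₀ : x₀ ∈ Ioo (0 : ℝ) 2)
    (x : ℝ → ℝ) (hinit : x 0 = x₀)
    (hsol : ∀ t ∈ Icc (0 : ℝ) (1 / (L + 1)),
      HasDerivAt x (a (x t) - (L + 1) * x₀) t) :
    ∀ t ∈ Icc (0 : ℝ) (1 / (L + 1)),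
      0 ≤ x t ∧ x t ≤ (1 - t) * x₀ ∧ x t < 2 ∧ |x t| ≤ Real.exp (-t) * |x₀| :=
  scalar_sampling_interval_estimate_general a ha0 hapos L hL hLip x₀ hx₀ x hinit hsol
end

section
/- Let ρ : [0,∞) → [0,∞) be continuous and positive definite (ρ(0)=0, ρ(s)>0 for s>0), and let y : [t₀, t₁] → [0,∞) be absolutely continuous with ẏ(t) ≤ −ρ(y(t)) almost everywhere. Let σ(s, t) be the flow of the scalar ODE ∂σ/∂t = −ρ(σ), σ(s,0) = s (assumed to exist for all t ≥ 0). Then y(t) ≤ σ(y(t₀), t − t₀) for all t ∈ [t₀, t₁]. -/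
/-!
With `G` a primitive of `1 / ρ` on `(0, ∞)`, `G (y t) + t` is nonincreasing along a positive
subsolution of `ẏ = -ρ(y)` and nondecreasing along a positive supersolution; as `G` is strictly
increasing, this compares the two as long as both stay positive, with no Lipschitz condition on
`ρ`. If `v b < y b`, pick `m` strictly between them and `c` with `v c = m`: on `[a, c]` both
functions stay positive (`v ≥ m`, `y ≥ y b`), so `y c ≤ m < y b ≤ y c`.
-/

open Set

theorem Convex.antitoneOn_of_hasDerivAt_nonpos {D : Set ℝ} (hD : Convex ℝ D) {f f' : ℝ → ℝ}
    (hf : ∀ x ∈ D, HasDerivAt f (f' x) x) (hf'₀ : ∀ x ∈ D, f' x ≤ 0) : AntitoneOn f D :=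
  antitoneOn_of_hasDerivWithinAt_nonpos hD (fun x hx ↦ (hf x hx).continuousAt.continuousWithinAt)
    (fun x hx ↦ (hf x (interior_subset hx)).hasDerivWithinAt)
    (fun x hx ↦ hf'₀ x (interior_subset hx))

theorem Convex.monotoneOn_of_hasDerivAt_nonneg {D : Set ℝ} (hD : Convex ℝ D) {f f' : ℝ → ℝ}
    (hf : ∀ x ∈ D, HasDerivAt f (f' x) x) (hf'₀ : ∀ x ∈ D, 0 ≤ f' x) : MonotoneOn f D :=
  monotoneOn_of_hasDerivWithinAt_nonneg hD (fun x hx ↦ (hf x hx).continuousAt.continuousWithinAt)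
    (fun x hx ↦ (hf x (interior_subset hx)).hasDerivWithinAt)
    (fun x hx ↦ hf'₀ x (interior_subset hx))

theorem Convex.strictMonoOn_of_hasDerivAt_pos {D : Set ℝ} (hD : Convex ℝ D) {f f' : ℝ → ℝ}
    (hf : ∀ x ∈ D, HasDerivAt f (f' x) x) (hf'₀ : ∀ x ∈ D, 0 < f' x) : StrictMonoOn f D :=
  strictMonoOn_of_hasDerivWithinAt_pos hD (fun x hx ↦ (hf x hx).continuousAt.continuousWithinAt)
    (fun x hx ↦ (hf x (interior_subset hx)).hasDerivWithinAt)
    (fun x hx ↦ hf'₀ x (interior_subset hx))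

/-- Only used on `(0, ∞)`, where `ρ` is positive; the base point `1` is arbitrary. -/
noncomputable def primitiveInv (ρ : ℝ → ℝ) (u : ℝ) : ℝ :=
  ∫ x in (1 : ℝ)..u, (ρ x)⁻¹

section PositiveRate

variable {ρ : ℝ → ℝ} (hρ : Continuous ρ) (hρpos : ∀ s, 0 < s → 0 < ρ s)
include hρ hρpos

theorem hasDerivAt_primitiveInv {u : ℝ} (hu : 0 < u) :
    HasDerivAt (primitiveInv ρ) (ρ u)⁻¹ u := by
  have hcont : ∀ x, 0 < x → ContinuousAt (fun x ↦ (ρ x)⁻¹) x :=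
    fun x hx ↦ hρ.continuousAt.inv₀ (hρpos x hx).ne'
  refine intervalIntegral.integral_hasDerivAt_right ?_ ?_ (hcont u hu)
  · refine ContinuousOn.intervalIntegrable fun x hx ↦ (hcont x ?_).continuousWithinAt
    exact (lt_min one_pos hu).trans_le hx.1
  · exact ⟨univ, Filter.univ_mem, hρ.measurable.inv.aestronglyMeasurable.restrict⟩

theorem strictMonoOn_primitiveInv : StrictMonoOn (primitiveInv ρ) (Ioi 0) :=
  (convex_Ioi 0).strictMonoOn_of_hasDerivAt_pos
    (fun _ hu ↦ hasDerivAt_primitiveInv hρ hρpos hu) (fun u hu ↦ inv_pos.2 (hρpos u hu))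

theorem hasDerivAt_primitiveInv_comp_add_id {y : ℝ → ℝ} {y' t : ℝ} (hyt : 0 < y t)
    (hy : HasDerivAt y y' t) :
    HasDerivAt (fun t ↦ primitiveInv ρ (y t) + t) ((ρ (y t))⁻¹ * y' + 1) t :=
  ((hasDerivAt_primitiveInv hρ hρpos hyt).comp t hy).add (hasDerivAt_id t)

theorem antitoneOn_primitiveInv_comp_add_id {y y' : ℝ → ℝ} {D : Set ℝ} (hD : Convex ℝ D)
    (hy : ∀ t ∈ D, HasDerivAt y (y' t) t) (hypos : ∀ t ∈ D, 0 < y t)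
    (hsub : ∀ t ∈ D, y' t ≤ -ρ (y t)) :
    AntitoneOn (fun t ↦ primitiveInv ρ (y t) + t) D := by
  refine hD.antitoneOn_of_hasDerivAt_nonpos
    (fun t ht ↦ hasDerivAt_primitiveInv_comp_add_id hρ hρpos (hypos t ht) (hy t ht))
    fun t ht ↦ ?_
  have hρy := hρpos _ (hypos t ht)
  calc (ρ (y t))⁻¹ * y' t + 1 ≤ (ρ (y t))⁻¹ * -ρ (y t) + 1 := by
        gcongr; exact hsub t ht
    _ = 0 := by field_simp; ring

theorem monotoneOn_primitiveInv_comp_add_id {v v' : ℝ → ℝ} {D : Set ℝ} (hD : Convex ℝ D)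
    (hv : ∀ t ∈ D, HasDerivAt v (v' t) t) (hvpos : ∀ t ∈ D, 0 < v t)
    (hsuper : ∀ t ∈ D, -ρ (v t) ≤ v' t) :
    MonotoneOn (fun t ↦ primitiveInv ρ (v t) + t) D := by
  refine hD.monotoneOn_of_hasDerivAt_nonneg
    (fun t ht ↦ hasDerivAt_primitiveInv_comp_add_id hρ hρpos (hvpos t ht) (hv t ht))
    fun t ht ↦ ?_
  have hρv := hρpos _ (hvpos t ht)
  calc (0 : ℝ) = (ρ (v t))⁻¹ * -ρ (v t) + 1 := by field_simp; ring
    _ ≤ (ρ (v t))⁻¹ * v' t + 1 := by gcongr; exact hsuper t ht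

theorem le_of_pos_subsolution_of_supersolution {y y' v v' : ℝ → ℝ} {a b : ℝ} (hab : a ≤ b)
    (hy : ∀ t ∈ Icc a b, HasDerivAt y (y' t) t) (hypos : ∀ t ∈ Icc a b, 0 < y t)
    (hsub : ∀ t ∈ Icc a b, y' t ≤ -ρ (y t))
    (hv : ∀ t ∈ Icc a b, HasDerivAt v (v' t) t) (hvpos : ∀ t ∈ Icc a b, 0 < v t)
    (hsuper : ∀ t ∈ Icc a b, -ρ (v t) ≤ v' t) (hya : y a ≤ v a) : y b ≤ v b := by
  have ha : a ∈ Icc a b := left_mem_Icc.2 hab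
  have hb : b ∈ Icc a b := right_mem_Icc.2 hab
  have hyG :=
    antitoneOn_primitiveInv_comp_add_id hρ hρpos (convex_Icc a b) hy hypos hsub ha hb hab
  have hvG :=
    monotoneOn_primitiveInv_comp_add_id hρ hρpos (convex_Icc a b) hv hvpos hsuper ha hb hab
  have hGa : primitiveInv ρ (y a) ≤ primitiveInv ρ (v a) :=
    (strictMonoOn_primitiveInv hρ hρpos).monotoneOn (hypos a ha) (hvpos a ha) hya
  have hGb : primitiveInv ρ (y b) ≤ primitiveInv ρ (v b) := by
    simp only at hyG hvG; linarith
  exact (strictMonoOn_primitiveInv hρ hρpos).le_iff_le (hypos b hb) (hvpos b hb) |>.1 hGb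

end PositiveRate

theorem antitoneOn_of_hasDerivAt_le_neg {ρ : ℝ → ℝ} (hρnn : ∀ s, 0 ≤ s → 0 ≤ ρ s)
    {y y' : ℝ → ℝ} {D : Set ℝ} (hD : Convex ℝ D) (hy : ∀ t ∈ D, HasDerivAt y (y' t) t)
    (hynn : ∀ t ∈ D, 0 ≤ y t) (hsub : ∀ t ∈ D, y' t ≤ -ρ (y t)) : AntitoneOn y D :=
  hD.antitoneOn_of_hasDerivAt_nonpos hy
    fun t ht ↦ (hsub t ht).trans (neg_nonpos.2 (hρnn _ (hynn t ht)))

theorem le_of_subsolution_of_solution {ρ : ℝ → ℝ} (hρ : Continuous ρ)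
    (hρnn : ∀ s, 0 ≤ s → 0 ≤ ρ s) (hρpos : ∀ s, 0 < s → 0 < ρ s)
    {y y' v : ℝ → ℝ} {a b : ℝ} (hab : a ≤ b)
    (hy : ∀ t ∈ Icc a b, HasDerivAt y (y' t) t) (hynn : ∀ t ∈ Icc a b, 0 ≤ y t)
    (hsub : ∀ t ∈ Icc a b, y' t ≤ -ρ (y t))
    (hv : ∀ t ∈ Icc a b, HasDerivAt v (-ρ (v t)) t) (hvnn : ∀ t ∈ Icc a b, 0 ≤ v t)
    (hya : y a ≤ v a) : y b ≤ v b := by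
  by_contra! hvy
  have ha : a ∈ Icc a b := left_mem_Icc.2 hab
  have hb : b ∈ Icc a b := right_mem_Icc.2 hab
  have hyanti := antitoneOn_of_hasDerivAt_le_neg hρnn (convex_Icc a b) hy hynn hsub
  have hvanti := antitoneOn_of_hasDerivAt_le_neg hρnn (convex_Icc a b) hv hvnn fun _ _ ↦ le_rfl
  obtain ⟨m, hvbm, hmyb⟩ := exists_between hvy
  have hm : m ∈ Icc (v b) (v a) := ⟨hvbm.le, hmyb.le.trans ((hyanti ha hb hab).trans hya)⟩
  obtain ⟨c, hc, hvc⟩ := intermediate_value_Icc' hab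
    (fun t ht ↦ (hv t ht).continuousAt.continuousWithinAt) hm
  have hsubset : Icc a c ⊆ Icc a b := Icc_subset_Icc_right hc.2
  have hyc : y c ≤ v c := by
    refine le_of_pos_subsolution_of_supersolution hρ hρpos hc.1 (fun t ht ↦ hy t (hsubset ht))
      (fun t ht ↦ ?_) (fun t ht ↦ hsub t (hsubset ht)) (fun t ht ↦ hv t (hsubset ht))
      (fun t ht ↦ ?_) (fun _ _ ↦ le_rfl) hya
    · linarith [hvnn b hb, hyanti (hsubset ht) hb (ht.2.trans hc.2)]
    · linarith [hvnn b hb, hvanti (hsubset ht) hc ht.2]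
  linarith [hyanti hc hb hc.2]

theorem comparison_principle_general
    (ρ : ℝ → ℝ) (hρcont : Continuous ρ) (hρ0 : ρ 0 = 0)
    (hρpos : ∀ s : ℝ, 0 < s → 0 < ρ s)
    (σ : ℝ → ℝ → ℝ)
    (hσ0 : ∀ s, 0 ≤ s → σ s 0 = s)
    (hσnonneg : ∀ s, 0 ≤ s → ∀ t, 0 ≤ t → 0 ≤ σ s t)
    (hσode : ∀ s, 0 ≤ s → ∀ t, 0 ≤ t → HasDerivAt (σ s) (-ρ (σ s t)) t)
    (t₀ t₁ : ℝ)
    (y y' : ℝ → ℝ)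
    (hy : ∀ t ∈ Icc t₀ t₁, HasDerivAt y (y' t) t)
    (hynn : ∀ t ∈ Icc t₀ t₁, 0 ≤ y t)
    (hineq : ∀ t ∈ Icc t₀ t₁, y' t ≤ -ρ (y t)) :
    ∀ t ∈ Icc t₀ t₁, y t ≤ σ (y t₀) (t - t₀) := by
  intro t ht
  have hρnn : ∀ s, 0 ≤ s → 0 ≤ ρ s := fun s hs ↦
    hs.eq_or_lt.elim (fun h ↦ h ▸ hρ0.ge) fun h ↦ (hρpos s h).le
  have hy₀ : 0 ≤ y t₀ := hynn t₀ ⟨le_rfl, ht.1.trans ht.2⟩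
  have hsubset : Icc t₀ t ⊆ Icc t₀ t₁ := Icc_subset_Icc_right ht.2
  have hv : ∀ s ∈ Icc t₀ t, HasDerivAt (fun s ↦ σ (y t₀) (s - t₀)) (-ρ (σ (y t₀) (s - t₀))) s :=
    fun s hs ↦ (hσode _ hy₀ _ (sub_nonneg.2 hs.1)).comp_sub_const s t₀
  refine le_of_subsolution_of_solution hρcont hρnn hρpos ht.1 (fun s hs ↦ hy s (hsubset hs))
    (fun s hs ↦ hynn s (hsubset hs)) (fun s hs ↦ hineq s (hsubset hs)) hv
    (fun s hs ↦ hσnonneg _ hy₀ _ (sub_nonneg.2 hs.1)) ?_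
  simp [hσ0 _ hy₀]

theorem comparison_principle
    (ρ : ℝ → ℝ) (hρcont : Continuous ρ) (hρ0 : ρ 0 = 0)
    (hρpos : ∀ s : ℝ, 0 < s → 0 < ρ s)
    (σ : ℝ → ℝ → ℝ)
    (hσ0 : ∀ s, 0 ≤ s → σ s 0 = s)
    (hσnonneg : ∀ s, 0 ≤ s → ∀ t, 0 ≤ t → 0 ≤ σ s t)
    (hσode : ∀ s, 0 ≤ s → ∀ t, 0 ≤ t → HasDerivAt (σ s) (-ρ (σ s t)) t)
    (t₀ t₁ : ℝ) (ht : t₀ ≤ t₁)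
    (y y' : ℝ → ℝ)
    (hy : ∀ t ∈ Icc t₀ t₁, HasDerivAt y (y' t) t)
    (hynn : ∀ t ∈ Icc t₀ t₁, 0 ≤ y t)
    (hineq : ∀ t ∈ Icc t₀ t₁, y' t ≤ -ρ (y t)) :
    ∀ t ∈ Icc t₀ t₁, y t ≤ σ (y t₀) (t - t₀) :=
  comparison_principle_general ρ hρcont hρ0 hρpos σ hσ0 hσnonneg hσode t₀ t₁ y y' hy hynn hineq
end

section
/- Let σ̃ : [0,∞) × [0,∞) → [0,∞) satisfy: σ̃(·, t) is nondecreasing for each t, σ̃(s, ·) is nonincreasing for each s, σ̃(0, t) = 0, σ̃ is bounded on bounded sets, continuous at points (0,t), and σ̃(s, t) → 0 as t → ∞ for each fixed s. Extend σ̃(s,t) := σ̃(s,0) for t ∈ [−1,0) and define σ(s, t) := s·e^{−t} + (1/s)·∫_{t−1}^{t} ∫_{s}^{2s} σ̃(ξ, w) dξ dw for s > 0, t ≥ 0, and σ(0, t) := 0. Then σ is of class KL and σ̃(s, t) ≤ σ(s, t) for all s, t ≥ 0. -/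
/-!
Since `σ̃` is nondecreasing in `s` and nonincreasing in `t`, averaging it over the box
`[s, 2s] × [t - 1, t]` gives `σ̃(s, t) ≤ σ(s, t) ≤ s e^{-t} + σ̃(2s, t - 1)`: the lower bound
is the majorization, the upper bound yields the decay in `t` and continuity at `s = 0`.
The substitution `ξ = s u` writes the `s`-average as `∫₁² σ̃(s u, ·) du`, which is
nondecreasing in `s`, and the term `s e^{-t}` makes `σ` strictly increasing. For `s > 0` the
double integral is locally Lipschitz in `(s, t)`, because monotonicity in both variables
bounds `σ̃` on every box `[0, S] × [T, ∞)`.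
-/

open Set Filter Topology MeasureTheory intervalIntegral

section IntervalIntegral

variable {g : ℝ → ℝ} {a b : ℝ}

theorem MonotoneOn.intervalIntegrable_of_Ici {c : ℝ} (hg : MonotoneOn g (Ici c)) (ha : c ≤ a)
    (hb : c ≤ b) : IntervalIntegrable g volume a b :=
  (hg.mono fun _ hx => (le_inf ha hb).trans hx.1).intervalIntegrable

theorem MonotoneOn.sub_mul_le_intervalIntegral (hab : a ≤ b) (hg : MonotoneOn g (Icc a b)) :
    (b - a) * g a ≤ ∫ x in a..b, g x := by
  calc (b - a) * g a = ∫ _ in a..b, g a := by simp [mul_comm]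
    _ ≤ ∫ x in a..b, g x :=
      integral_mono_on hab intervalIntegrable_const
        (hg.mono (uIcc_of_le hab).subset).intervalIntegrable
        fun x hx => hg ⟨le_rfl, hab⟩ hx hx.1

theorem MonotoneOn.intervalIntegral_le_sub_mul (hab : a ≤ b) (hg : MonotoneOn g (Icc a b)) :
    ∫ x in a..b, g x ≤ (b - a) * g b := by
  calc ∫ x in a..b, g x ≤ ∫ _ in a..b, g b :=
      integral_mono_on hab (hg.mono (uIcc_of_le hab).subset).intervalIntegrable
        intervalIntegrable_const fun x hx => hg hx ⟨hab, le_rfl⟩ hx.2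
    _ = (b - a) * g b := by simp [mul_comm]

theorem AntitoneOn.sub_mul_le_intervalIntegral (hab : a ≤ b) (hg : AntitoneOn g (Icc a b)) :
    (b - a) * g b ≤ ∫ x in a..b, g x := by
  calc (b - a) * g b = ∫ _ in a..b, g b := by simp [mul_comm]
    _ ≤ ∫ x in a..b, g x :=
      integral_mono_on hab intervalIntegrable_const
        (hg.mono (uIcc_of_le hab).subset).intervalIntegrable
        fun x hx => hg hx ⟨hab, le_rfl⟩ hx.2

theorem AntitoneOn.intervalIntegral_le_sub_mul (hab : a ≤ b) (hg : AntitoneOn g (Icc a b)) :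
    ∫ x in a..b, g x ≤ (b - a) * g a := by
  calc ∫ x in a..b, g x ≤ ∫ _ in a..b, g a :=
      integral_mono_on hab (hg.mono (uIcc_of_le hab).subset).intervalIntegrable
        intervalIntegrable_const fun x hx => hg ⟨le_rfl, hab⟩ hx hx.1
    _ = (b - a) * g a := by simp [mul_comm]

theorem Antitone.antitone_intervalIntegral_sub (hg : Antitone g) {c : ℝ} (hc : 0 ≤ c) :
    Antitone fun t => ∫ x in (t - c)..t, g x := by
  have shift (t : ℝ) : ∫ x in (t - c)..t, g x = ∫ x in (-c)..0, g (x + t) := by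
    rw [integral_comp_add_right]; ring_nf
  have shifted (t : ℝ) : Antitone fun x => g (x + t) := hg.comp_monotone (monotone_id.add_const t)
  intro t t' htt'
  simp only [shift]
  exact integral_mono_on (by linarith) (shifted t').intervalIntegrable
    (shifted t).intervalIntegrable fun x _ => hg (by linarith)

theorem abs_intervalIntegral_sub_intervalIntegral_le {c d C : ℝ}
    (hab : IntervalIntegrable g volume a b) (hcd : IntervalIntegrable g volume c d)
    (hac : IntervalIntegrable g volume a c) (hC₁ : ∀ x ∈ uIcc a c, |g x| ≤ C)
    (hC₂ : ∀ x ∈ uIcc b d, |g x| ≤ C) :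
    |(∫ x in a..b, g x) - ∫ x in c..d, g x| ≤ C * (|a - c| + |b - d|) := by
  have bound {x y : ℝ} (h : ∀ z ∈ uIcc x y, |g z| ≤ C) :
      |∫ z in x..y, g z| ≤ C * |x - y| := by
    rw [abs_sub_comm]
    simpa only [Real.norm_eq_abs] using norm_integral_le_of_norm_le_const fun z hz =>
      (Real.norm_eq_abs _).trans_le (h z (uIoc_subset_uIcc hz))
  rw [integral_interval_sub_interval_comm hab hcd hac, mul_add]
  exact (abs_sub _ _).trans (add_le_add (bound hC₁) (bound hC₂))

theorem one_div_mul_integral_two_mul (h : ℝ → ℝ) {s : ℝ} (hs : s ≠ 0) :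
    1 / s * ∫ ξ in s..(2 * s), h ξ = ∫ u in (1 : ℝ)..2, h (s * u) := by
  rw [integral_comp_mul_left h hs, mul_one, mul_comm s 2, smul_eq_mul, one_div]

end IntervalIntegral

noncomputable def dyadicIntegral (f : ℝ → ℝ → ℝ) (s w : ℝ) : ℝ :=
  ∫ ξ in s..(2 * s), f ξ w

noncomputable def majorantIntegral (f : ℝ → ℝ → ℝ) (s t : ℝ) : ℝ :=
  ∫ w in (t - 1)..t, dyadicIntegral f s w

/-- For `s > 0` this is the paper's `σ`; at `s = 0` it is `0`, since `1 / 0 = 0`. -/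
noncomputable def klMajorant (f : ℝ → ℝ → ℝ) (s t : ℝ) : ℝ :=
  s * Real.exp (-t) + 1 / s * majorantIntegral f s t

section Majorant

variable {f : ℝ → ℝ → ℝ} {s t : ℝ}

theorem dyadicIntegral_nonneg (hf_nonneg : ∀ s, 0 ≤ s → ∀ t, 0 ≤ f s t) (hs : 0 ≤ s)
    (w : ℝ) : 0 ≤ dyadicIntegral f s w :=
  integral_nonneg (by linarith) fun ξ hξ => hf_nonneg ξ (hs.trans hξ.1) w

theorem mul_le_dyadicIntegral (hf_mono : ∀ t, MonotoneOn (fun s => f s t) (Ici 0)) (hs : 0 ≤ s)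
    (w : ℝ) : s * f s w ≤ dyadicIntegral f s w := by
  have := ((hf_mono w).mono fun ξ hξ => hs.trans hξ.1).sub_mul_le_intervalIntegral
    (by linarith : s ≤ 2 * s)
  rwa [show 2 * s - s = s by ring] at this

theorem dyadicIntegral_le_mul (hf_mono : ∀ t, MonotoneOn (fun s => f s t) (Ici 0)) (hs : 0 ≤ s)
    (w : ℝ) : dyadicIntegral f s w ≤ s * f (2 * s) w := by
  have := ((hf_mono w).mono fun ξ hξ => hs.trans hξ.1).intervalIntegral_le_sub_mul
    (by linarith : s ≤ 2 * s)
  rwa [show 2 * s - s = s by ring] at this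

theorem antitone_dyadicIntegral (hf_mono : ∀ t, MonotoneOn (fun s => f s t) (Ici 0))
    (hf_anti : ∀ s, 0 ≤ s → Antitone (f s)) (hs : 0 ≤ s) : Antitone (dyadicIntegral f s) :=
  fun _ _ hw => integral_mono_on (by linarith)
    ((hf_mono _).intervalIntegrable_of_Ici hs (by linarith))
    ((hf_mono _).intervalIntegrable_of_Ici hs (by linarith))
    fun ξ hξ => hf_anti ξ (hs.trans hξ.1) hw

theorem monotoneOn_one_div_mul_dyadicIntegral
    (hf_mono : ∀ t, MonotoneOn (fun s => f s t) (Ici 0)) (w : ℝ) :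
    MonotoneOn (fun s => 1 / s * dyadicIntegral f s w) (Ioi 0) := by
  have integrable {c : ℝ} (hc : 0 < c) : IntervalIntegrable (fun u => f (c * u) w) volume 1 2 :=
    MonotoneOn.intervalIntegrable_of_Ici (c := 0)
      (fun x hx y hy hxy => hf_mono w (mul_nonneg hc.le hx) (mul_nonneg hc.le hy)
        (mul_le_mul_of_nonneg_left hxy hc.le)) zero_le_one zero_le_two
  intro a ha b hb hab
  simp only [dyadicIntegral, one_div_mul_integral_two_mul _ (ne_of_gt ha),
    one_div_mul_integral_two_mul _ (ne_of_gt hb)]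
  refine integral_mono_on one_le_two (integrable ha) (integrable hb) fun u hu => ?_
  have hu : 0 ≤ u := zero_le_one.trans hu.1
  exact hf_mono w (mul_nonneg (le_of_lt ha) hu) (mul_nonneg (le_of_lt hb) hu)
    (mul_le_mul_of_nonneg_right hab hu)

theorem majorantIntegral_nonneg (hf_nonneg : ∀ s, 0 ≤ s → ∀ t, 0 ≤ f s t) (hs : 0 ≤ s)
    (t : ℝ) : 0 ≤ majorantIntegral f s t :=
  integral_nonneg (by linarith) fun w _ => dyadicIntegral_nonneg hf_nonneg hs w

theorem antitone_majorantIntegral (hf_mono : ∀ t, MonotoneOn (fun s => f s t) (Ici 0))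
    (hf_anti : ∀ s, 0 ≤ s → Antitone (f s)) (hs : 0 ≤ s) :
    Antitone (majorantIntegral f s) :=
  (antitone_dyadicIntegral hf_mono hf_anti hs).antitone_intervalIntegral_sub zero_le_one

theorem dyadicIntegral_le_majorantIntegral (hf_mono : ∀ t, MonotoneOn (fun s => f s t) (Ici 0))
    (hf_anti : ∀ s, 0 ≤ s → Antitone (f s)) (hs : 0 ≤ s) (t : ℝ) :
    dyadicIntegral f s t ≤ majorantIntegral f s t := by
  simpa [majorantIntegral] using ((antitone_dyadicIntegral hf_mono hf_anti hs).antitoneOn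
    _).sub_mul_le_intervalIntegral (by linarith : t - 1 ≤ t)

theorem majorantIntegral_le_dyadicIntegral (hf_mono : ∀ t, MonotoneOn (fun s => f s t) (Ici 0))
    (hf_anti : ∀ s, 0 ≤ s → Antitone (f s)) (hs : 0 ≤ s) (t : ℝ) :
    majorantIntegral f s t ≤ dyadicIntegral f s (t - 1) := by
  simpa [majorantIntegral] using ((antitone_dyadicIntegral hf_mono hf_anti hs).antitoneOn
    _).intervalIntegral_le_sub_mul (by linarith : t - 1 ≤ t)

theorem monotoneOn_one_div_mul_majorantIntegral (hf_nonneg : ∀ s, 0 ≤ s → ∀ t, 0 ≤ f s t)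
    (hf_mono : ∀ t, MonotoneOn (fun s => f s t) (Ici 0))
    (hf_anti : ∀ s, 0 ≤ s → Antitone (f s))
    (t : ℝ) : MonotoneOn (fun s => 1 / s * majorantIntegral f s t) (Ici 0) := by
  intro a ha b hb hab
  rcases (mem_Ici.1 ha).eq_or_lt with rfl | ha
  · simpa using mul_nonneg (by simpa using hb) (majorantIntegral_nonneg hf_nonneg hb t)
  have hb : 0 < b := ha.trans_le hab
  simp only [majorantIntegral, ← intervalIntegral.integral_const_mul]
  exact integral_mono_on (by linarith)
    (((antitone_dyadicIntegral hf_mono hf_anti ha.le).intervalIntegrable).const_mul _)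
    (((antitone_dyadicIntegral hf_mono hf_anti hb.le).intervalIntegrable).const_mul _)
    fun w _ => monotoneOn_one_div_mul_dyadicIntegral hf_mono w ha hb hab

theorem abs_dyadicIntegral_sub_le (hf_mono : ∀ t, MonotoneOn (fun s => f s t) (Ici 0))
    {S C s' w : ℝ} (hC : ∀ ξ ∈ Icc 0 (2 * S), |f ξ w| ≤ C) (hs : s ∈ Icc 0 S)
    (hs' : s' ∈ Icc 0 S) :
    |dyadicIntegral f s w - dyadicIntegral f s' w| ≤ 3 * C * |s - s'| := by
  have integrable {a b : ℝ} (ha : 0 ≤ a) (hb : 0 ≤ b) :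
      IntervalIntegrable (fun ξ => f ξ w) volume a b :=
    (hf_mono w).intervalIntegrable_of_Ici ha hb
  have key := abs_intervalIntegral_sub_intervalIntegral_le (g := fun ξ => f ξ w)
    (b := 2 * s) (d := 2 * s')
    (integrable hs.1 (by linarith [hs.1])) (integrable hs'.1 (by linarith [hs'.1]))
    (integrable hs.1 hs'.1)
    (fun x hx => hC x (uIcc_subset_Icc ⟨hs.1, by linarith [hs.2, hs.1]⟩
      ⟨hs'.1, by linarith [hs'.2, hs'.1]⟩ hx))
    (fun x hx => hC x (uIcc_subset_Icc ⟨by linarith [hs.1], by linarith [hs.2]⟩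
      ⟨by linarith [hs'.1], by linarith [hs'.2]⟩ hx))
  rw [← mul_sub, abs_mul, abs_two] at key
  unfold dyadicIntegral
  linarith

theorem abs_majorantIntegral_sub_le_of_fst (hf_mono : ∀ t, MonotoneOn (fun s => f s t) (Ici 0))
    (hf_anti : ∀ s, 0 ≤ s → Antitone (f s)) {S C s' : ℝ}
    (hC : ∀ ξ ∈ Icc 0 (2 * S), ∀ w ∈ Icc (t - 1) t, |f ξ w| ≤ C) (hs : s ∈ Icc 0 S)
    (hs' : s' ∈ Icc 0 S) :
    |majorantIntegral f s t - majorantIntegral f s' t| ≤ 3 * C * |s - s'| := by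
  rw [majorantIntegral, majorantIntegral, ← integral_sub
    (antitone_dyadicIntegral hf_mono hf_anti hs.1).intervalIntegrable
    (antitone_dyadicIntegral hf_mono hf_anti hs'.1).intervalIntegrable]
  refine (Real.norm_eq_abs _).symm.trans_le ?_
  simpa using norm_integral_le_of_norm_le_const (a := t - 1) (b := t)
    (f := fun w => dyadicIntegral f s w - dyadicIntegral f s' w) fun w hw =>
    (Real.norm_eq_abs _).trans_le <| abs_dyadicIntegral_sub_le hf_mono (fun ξ hξ => hC ξ hξ w
      (Ioc_subset_Icc_self (by rwa [uIoc_of_le (by linarith : t - 1 ≤ t)] at hw))) hs hs'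

theorem abs_majorantIntegral_sub_le_of_snd (hf_mono : ∀ t, MonotoneOn (fun s => f s t) (Ici 0))
    (hf_anti : ∀ s, 0 ≤ s → Antitone (f s)) (hs : 0 ≤ s) {M c t' : ℝ}
    (hM : ∀ w, c ≤ w → |dyadicIntegral f s w| ≤ M) (ht : c ≤ t - 1) (ht' : c ≤ t' - 1) :
    |majorantIntegral f s t - majorantIntegral f s t'| ≤ 2 * M * |t - t'| := by
  have hG (a b : ℝ) : IntervalIntegrable (dyadicIntegral f s) volume a b :=
    (antitone_dyadicIntegral hf_mono hf_anti hs).intervalIntegrable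
  have key := abs_intervalIntegral_sub_intervalIntegral_le (b := t) (d := t')
    (hG _ _) (hG _ _) (hG _ _)
    (fun x hx => hM x ((le_inf ht ht').trans hx.1))
    (fun x hx => hM x ((le_inf (by linarith) (by linarith)).trans hx.1))
  rw [show t - 1 - (t' - 1) = t - t' by ring] at key
  unfold majorantIntegral
  linarith

theorem continuousAt_majorantIntegral (hf_nonneg : ∀ s, 0 ≤ s → ∀ t, 0 ≤ f s t)
    (hf_mono : ∀ t, MonotoneOn (fun s => f s t) (Ici 0))
    (hf_anti : ∀ s, 0 ≤ s → Antitone (f s))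
    {s₀ t₀ : ℝ} (hs₀ : 0 < s₀) :
    ContinuousAt (fun p : ℝ × ℝ => majorantIntegral f p.1 p.2) (s₀, t₀) := by
  -- by monotonicity in both variables, `C` bounds `f` on `[0, 4 s₀] × [t₀ - 2, ∞)`,
  -- the only region seen by the integrals at points within distance `min s₀ 1`
  set C := f (4 * s₀) (t₀ - 2)
  have hC : 0 ≤ C := hf_nonneg _ (by positivity) _
  have hf_le {ξ w : ℝ} (hξ : ξ ∈ Icc 0 (4 * s₀)) (hw : t₀ - 2 ≤ w) :
      |f ξ w| ≤ C := by
    rw [abs_of_nonneg (hf_nonneg ξ hξ.1 w)]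
    exact (hf_mono w hξ.1 (mem_Ici.2 (by positivity)) hξ.2).trans (hf_anti _ (by positivity) hw)
  have hG_le {w : ℝ} (hw : t₀ - 2 ≤ w) : |dyadicIntegral f s₀ w| ≤ s₀ * C := by
    rw [abs_of_nonneg (dyadicIntegral_nonneg hf_nonneg hs₀.le w)]
    exact (dyadicIntegral_le_mul hf_mono hs₀.le w).trans <| mul_le_mul_of_nonneg_left
      ((le_abs_self _).trans (hf_le ⟨by positivity, by linarith⟩ hw)) hs₀.le
  refine continuousAt_of_locally_lipschitz (lt_min hs₀ one_pos) (3 * C + 2 * (s₀ * C))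
    fun p hp => ?_
  have h₁ : |p.1 - s₀| ≤ dist p (s₀, t₀) := by
    rw [Prod.dist_eq, ← Real.dist_eq]; exact le_max_left _ _
  have h₂ : |p.2 - t₀| ≤ dist p (s₀, t₀) := by
    rw [Prod.dist_eq, ← Real.dist_eq p.2]; exact le_max_right _ _
  have hp₁ := abs_lt.1 (h₁.trans_lt (hp.trans_le (min_le_left _ _)))
  have hp₂ := abs_lt.1 (h₂.trans_lt (hp.trans_le (min_le_right _ _)))
  calc dist (majorantIntegral f p.1 p.2) (majorantIntegral f s₀ t₀)
      ≤ |majorantIntegral f p.1 p.2 - majorantIntegral f s₀ p.2|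
        + |majorantIntegral f s₀ p.2 - majorantIntegral f s₀ t₀| := abs_sub_le _ _ _
    _ ≤ 3 * C * |p.1 - s₀| + 2 * (s₀ * C) * |p.2 - t₀| := by
      refine add_le_add (abs_majorantIntegral_sub_le_of_fst hf_mono hf_anti (S := 2 * s₀)
        (fun ξ hξ w hw => hf_le ⟨hξ.1, by linarith [hξ.2]⟩ (by linarith [hw.1]))
        ⟨by linarith, by linarith⟩ ⟨hs₀.le, by linarith⟩)
        (abs_majorantIntegral_sub_le_of_snd hf_mono hf_anti hs₀.le (c := t₀ - 2)
          (fun w hw => hG_le hw) (by linarith) (by linarith))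
    _ ≤ (3 * C + 2 * (s₀ * C)) * dist p (s₀, t₀) := by
      rw [add_mul]
      exact add_le_add (mul_le_mul_of_nonneg_left h₁ (by linarith))
        (mul_le_mul_of_nonneg_left h₂ (by positivity))

@[simp]
theorem klMajorant_zero_left (t : ℝ) : klMajorant f 0 t = 0 := by
  simp [klMajorant]

theorem klMajorant_nonneg (hf_nonneg : ∀ s, 0 ≤ s → ∀ t, 0 ≤ f s t) (hs : 0 ≤ s)
    (t : ℝ) : 0 ≤ klMajorant f s t := by
  have := majorantIntegral_nonneg hf_nonneg hs t
  unfold klMajorant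
  positivity

theorem le_klMajorant (hf_mono : ∀ t, MonotoneOn (fun s => f s t) (Ici 0))
    (hf_anti : ∀ s, 0 ≤ s → Antitone (f s)) (hs : 0 < s) (t : ℝ) :
    f s t ≤ klMajorant f s t := by
  have h : s * f s t ≤ majorantIntegral f s t :=
    (mul_le_dyadicIntegral hf_mono hs.le t).trans
      (dyadicIntegral_le_majorantIntegral hf_mono hf_anti hs.le t)
  have : f s t ≤ 1 / s * majorantIntegral f s t := by
    rwa [one_div_mul_eq_div, le_div_iff₀ hs, mul_comm]
  unfold klMajorant
  nlinarith [Real.exp_pos (-t)]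

theorem klMajorant_le (hf_nonneg : ∀ s, 0 ≤ s → ∀ t, 0 ≤ f s t)
    (hf_mono : ∀ t, MonotoneOn (fun s => f s t) (Ici 0))
    (hf_anti : ∀ s, 0 ≤ s → Antitone (f s))
    (hs : 0 ≤ s) (t : ℝ) : klMajorant f s t ≤ s * Real.exp (-t) + f (2 * s) (t - 1) := by
  rcases hs.eq_or_lt with rfl | hs
  · simpa using hf_nonneg 0 le_rfl (t - 1)
  have h : majorantIntegral f s t ≤ s * f (2 * s) (t - 1) :=
    (majorantIntegral_le_dyadicIntegral hf_mono hf_anti hs.le t).trans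
      (dyadicIntegral_le_mul hf_mono hs.le (t - 1))
  have : 1 / s * majorantIntegral f s t ≤ f (2 * s) (t - 1) := by
    rwa [one_div_mul_eq_div, div_le_iff₀ hs, mul_comm]
  unfold klMajorant
  linarith

theorem strictMonoOn_klMajorant (hf_nonneg : ∀ s, 0 ≤ s → ∀ t, 0 ≤ f s t)
    (hf_mono : ∀ t, MonotoneOn (fun s => f s t) (Ici 0))
    (hf_anti : ∀ s, 0 ≤ s → Antitone (f s))
    (t : ℝ) : StrictMonoOn (fun s => klMajorant f s t) (Ici 0) :=
  ((strictMono_mul_right_of_pos (Real.exp_pos (-t))).strictMonoOn _).add_monotone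
    (monotoneOn_one_div_mul_majorantIntegral hf_nonneg hf_mono hf_anti t)

theorem antitone_klMajorant (hf_mono : ∀ t, MonotoneOn (fun s => f s t) (Ici 0))
    (hf_anti : ∀ s, 0 ≤ s → Antitone (f s)) (hs : 0 ≤ s) : Antitone (klMajorant f s) :=
  fun _ _ htt' => add_le_add
    (mul_le_mul_of_nonneg_left (Real.exp_le_exp.2 (neg_le_neg htt')) hs)
    (mul_le_mul_of_nonneg_left (antitone_majorantIntegral hf_mono hf_anti hs htt') (by positivity))

theorem tendsto_klMajorant_atTop (hf_nonneg : ∀ s, 0 ≤ s → ∀ t, 0 ≤ f s t)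
    (hf_mono : ∀ t, MonotoneOn (fun s => f s t) (Ici 0))
    (hf_anti : ∀ s, 0 ≤ s → Antitone (f s))
    (hf_decay : ∀ s, 0 ≤ s → Tendsto (f s) atTop (𝓝 0)) (hs : 0 ≤ s) :
    Tendsto (klMajorant f s) atTop (𝓝 0) := by
  have hbound : Tendsto (fun t => s * Real.exp (-t) + f (2 * s) (t - 1)) atTop (𝓝 0) := by
    simpa [sub_eq_add_neg] using (Real.tendsto_exp_neg_atTop_nhds_zero.const_mul s).add
      ((hf_decay (2 * s) (by positivity)).comp (tendsto_atTop_add_const_right _ (-1) tendsto_id))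
  exact squeeze_zero (klMajorant_nonneg hf_nonneg hs) (klMajorant_le hf_nonneg hf_mono hf_anti hs)
    hbound

theorem continuousAt_klMajorant (hf_nonneg : ∀ s, 0 ≤ s → ∀ t, 0 ≤ f s t)
    (hf_mono : ∀ t, MonotoneOn (fun s => f s t) (Ici 0))
    (hf_anti : ∀ s, 0 ≤ s → Antitone (f s))
    {s₀ t₀ : ℝ} (hs₀ : 0 < s₀) :
    ContinuousAt (fun p : ℝ × ℝ => klMajorant f p.1 p.2) (s₀, t₀) :=
  (continuous_fst.mul (continuous_snd.neg.rexp)).continuousAt.add <|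
    (continuousAt_const.div continuousAt_fst hs₀.ne').mul
      (continuousAt_majorantIntegral hf_nonneg hf_mono hf_anti hs₀)

theorem continuousWithinAt_klMajorant_zero (hf_nonneg : ∀ s, 0 ≤ s → ∀ t, 0 ≤ f s t)
    (hf_mono : ∀ t, MonotoneOn (fun s => f s t) (Ici 0))
    (hf_anti : ∀ s, 0 ≤ s → Antitone (f s))
    (hf_zero : ∀ t, Tendsto (fun s => f s t) (𝓝[≥] 0) (𝓝 0)) (t₀ : ℝ) :
    ContinuousWithinAt (fun p : ℝ × ℝ => klMajorant f p.1 p.2) (Ici 0 ×ˢ univ)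
      (0, t₀) := by
  have hdouble :
      Tendsto (fun p : ℝ × ℝ => 2 * p.1) (𝓝[Ici 0 ×ˢ univ] (0, t₀)) (𝓝[≥] 0) := by
    refine tendsto_nhdsWithin_iff.2 ⟨?_, eventually_nhdsWithin_of_forall fun p hp => ?_⟩
    · simpa using ((by fun_prop : Continuous fun p : ℝ × ℝ => 2 * p.1).tendsto
        (0, t₀)).mono_left nhdsWithin_le_nhds
    · exact mul_nonneg zero_le_two (mem_Ici.1 hp.1)
  have hbound : Tendsto (fun p : ℝ × ℝ => p.1 * Real.exp (-p.2) + f (2 * p.1) (t₀ - 2))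
      (𝓝[Ici 0 ×ˢ univ] (0, t₀)) (𝓝 0) := by
    simpa using ((continuous_fst.mul (continuous_snd.neg.rexp)).tendsto (0, t₀)).mono_left
      nhdsWithin_le_nhds |>.add ((hf_zero _).comp hdouble)
  have hnear : ∀ᶠ p : ℝ × ℝ in 𝓝[Ici 0 ×ˢ univ] (0, t₀), t₀ - 1 < p.2 :=
    eventually_nhdsWithin_of_eventually_nhds <|
      continuous_snd.continuousAt.eventually (lt_mem_nhds (by linarith : t₀ - 1 < t₀))
  rw [ContinuousWithinAt, klMajorant_zero_left]
  refine squeeze_zero'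
    (eventually_nhdsWithin_of_forall fun p hp => klMajorant_nonneg hf_nonneg hp.1 _) ?_ hbound
  filter_upwards [hnear, self_mem_nhdsWithin] with p hp₂ hp
  exact (klMajorant_le hf_nonneg hf_mono hf_anti hp.1 _).trans <| add_le_add le_rfl
    (hf_anti _ (mul_nonneg zero_le_two hp.1) (by linarith))

theorem continuousOn_klMajorant (hf_nonneg : ∀ s, 0 ≤ s → ∀ t, 0 ≤ f s t)
    (hf_mono : ∀ t, MonotoneOn (fun s => f s t) (Ici 0))
    (hf_anti : ∀ s, 0 ≤ s → Antitone (f s))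
    (hf_zero : ∀ t, Tendsto (fun s => f s t) (𝓝[≥] 0) (𝓝 0)) :
    ContinuousOn (fun p : ℝ × ℝ => klMajorant f p.1 p.2) (Ici 0 ×ˢ univ) := by
  rintro ⟨s, t⟩ ⟨hs, -⟩
  rcases (mem_Ici.1 hs).eq_or_lt with rfl | hs
  · exact continuousWithinAt_klMajorant_zero hf_nonneg hf_mono hf_anti hf_zero t
  · exact (continuousAt_klMajorant hf_nonneg hf_mono hf_anti hs).continuousWithinAt

end Majorant

theorem tendsto_comp_max_nhdsWithin_Ici_zero {σ' : ℝ → ℝ → ℝ}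
    (hnonneg : ∀ s t : ℝ, 0 ≤ s → 0 ≤ t → 0 ≤ σ' s t)
    (hanti : ∀ s : ℝ, 0 ≤ s → AntitoneOn (σ' s) (Ici 0)) (hzero : σ' 0 0 = 0)
    (hcont0 : Tendsto (fun s => σ' s 0) (𝓝[>] 0) (𝓝 0)) (t : ℝ) :
    Tendsto (fun s => σ' s (max t 0)) (𝓝[≥] 0) (𝓝 0) := by
  have h₀ : Tendsto (fun s => σ' s 0) (𝓝[≥] 0) (𝓝 0) := by
    have h : ContinuousWithinAt (fun s => σ' s 0) (Ioi 0) 0 := by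
      rwa [ContinuousWithinAt, hzero]
    simpa only [ContinuousWithinAt, hzero] using continuousWithinAt_Ioi_iff_Ici.1 h
  exact squeeze_zero'
    (eventually_nhdsWithin_of_forall fun s hs => hnonneg s _ hs (le_max_right t 0))
    (eventually_nhdsWithin_of_forall fun s hs =>
      hanti s hs self_mem_Ici (le_max_right t 0) (le_max_right t 0)) h₀

theorem KL_majorant_construction_general
    (σ' : ℝ → ℝ → ℝ)
    (hnonneg : ∀ s t : ℝ, 0 ≤ s → 0 ≤ t → 0 ≤ σ' s t)
    (hmono : ∀ t : ℝ, 0 ≤ t → MonotoneOn (fun s => σ' s t) (Ici 0))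
    (hanti : ∀ s : ℝ, 0 ≤ s → AntitoneOn (σ' s) (Ici 0))
    (hzero : ∀ t : ℝ, 0 ≤ t → σ' 0 t = 0)
    (hcont0 : Tendsto (fun s => σ' s 0) (nhdsWithin 0 (Ioi 0)) (nhds 0))
    (hdecay : ∀ s : ℝ, 0 ≤ s → Tendsto (σ' s) atTop (nhds 0))
    (σe : ℝ → ℝ → ℝ)
    (hσe : ∀ s t : ℝ, σe s t = if t < 0 then σ' s 0 else σ' s t)
    (σ : ℝ → ℝ → ℝ)
    (hσ : ∀ s t : ℝ, 0 < s →
      σ s t = s * Real.exp (-t) + (1 / s) * ∫ w in (t - 1)..t, ∫ ξ in s..(2 * s), σe ξ w)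
    (hσ0 : ∀ t : ℝ, σ 0 t = 0) :
    (∀ s t : ℝ, 0 ≤ s → 0 ≤ t → σ' s t ≤ σ s t) ∧
    ContinuousOn (fun p : ℝ × ℝ => σ p.1 p.2) (Ici 0 ×ˢ Ici 0) ∧
    (∀ t : ℝ, 0 ≤ t → StrictMonoOn (fun s => σ s t) (Ici 0) ∧ σ 0 t = 0) ∧
    (∀ s : ℝ, 0 ≤ s → AntitoneOn (σ s) (Ici 0) ∧ Tendsto (σ s) atTop (nhds 0)) := by
  obtain rfl : σe = fun s t => σ' s (max t 0) := by
    ext s t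
    rw [hσe]
    split_ifs with ht
    · rw [max_eq_right ht.le]
    · rw [max_eq_left (not_lt.1 ht)]
  have hf_nonneg : ∀ s, 0 ≤ s → ∀ t, 0 ≤ σ' s (max t 0) := fun s hs t =>
    hnonneg s _ hs (le_max_right t 0)
  have hf_mono : ∀ t, MonotoneOn (fun s => σ' s (max t 0)) (Ici 0) := fun t =>
    hmono _ (le_max_right t 0)
  have hf_anti : ∀ s, 0 ≤ s → Antitone fun t => σ' s (max t 0) := fun s hs a b hab =>
    hanti s hs (le_max_right a 0) (le_max_right b 0) (max_le_max_right 0 hab)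
  have hf_zero := tendsto_comp_max_nhdsWithin_Ici_zero hnonneg hanti (hzero 0 le_rfl) hcont0
  have hf_decay : ∀ s, 0 ≤ s → Tendsto (fun t => σ' s (max t 0)) atTop (𝓝 0) :=
    fun s hs => (hdecay s hs).comp (tendsto_atTop_mono (le_max_left · 0) tendsto_id)
  have hσ_eq : ∀ s, 0 ≤ s → σ s = klMajorant (fun s t => σ' s (max t 0)) s :=
    fun s hs => funext fun t => by
      rcases hs.eq_or_lt with rfl | hs
      · rw [hσ0, klMajorant_zero_left]
      · exact hσ s t hs
  refine ⟨fun s t hs ht => ?_, ?_, fun t _ => ⟨?_, hσ0 t⟩, fun s hs => ?_⟩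
  · rcases hs.eq_or_lt with rfl | hs
    · rw [hzero t ht, hσ0]
    · simpa [hσ_eq s hs.le, max_eq_left ht] using le_klMajorant hf_mono hf_anti hs t
  · exact ((continuousOn_klMajorant hf_nonneg hf_mono hf_anti hf_zero).mono
      (prod_mono subset_rfl (subset_univ _))).congr fun p hp => congrFun (hσ_eq p.1 hp.1) p.2
  · exact (strictMonoOn_klMajorant hf_nonneg hf_mono hf_anti t).congr fun s hs =>
      (congrFun (hσ_eq s hs) t).symm
  · rw [hσ_eq s hs]
    exact ⟨(antitone_klMajorant hf_mono hf_anti hs).antitoneOn _,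
      tendsto_klMajorant_atTop hf_nonneg hf_mono hf_anti hf_decay hs⟩

theorem KL_majorant_construction
    (σ' : ℝ → ℝ → ℝ)
    (hnonneg : ∀ s t : ℝ, 0 ≤ s → 0 ≤ t → 0 ≤ σ' s t)
    (hmono : ∀ t : ℝ, 0 ≤ t → MonotoneOn (fun s => σ' s t) (Ici 0))
    (hanti : ∀ s : ℝ, 0 ≤ s → AntitoneOn (σ' s) (Ici 0))
    (hzero : ∀ t : ℝ, 0 ≤ t → σ' 0 t = 0)
    (hbdd : ∀ S : ℝ, ∃ C : ℝ, ∀ s ∈ Icc (0 : ℝ) S, ∀ t : ℝ, 0 ≤ t → σ' s t ≤ C)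
    (hcont0 : Tendsto (fun s => σ' s 0) (nhdsWithin 0 (Ioi 0)) (nhds 0))
    (hdecay : ∀ s : ℝ, 0 ≤ s → Tendsto (σ' s) atTop (nhds 0))
    (σe : ℝ → ℝ → ℝ)
    (hσe : ∀ s t : ℝ, σe s t = if t < 0 then σ' s 0 else σ' s t)
    (σ : ℝ → ℝ → ℝ)
    (hσ : ∀ s t : ℝ, 0 < s →
      σ s t = s * Real.exp (-t) + (1 / s) * ∫ w in (t - 1)..t, ∫ ξ in s..(2 * s), σe ξ w)
    (hσ0 : ∀ t : ℝ, σ 0 t = 0) :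
    (∀ s t : ℝ, 0 ≤ s → 0 ≤ t → σ' s t ≤ σ s t) ∧
    ContinuousOn (fun p : ℝ × ℝ => σ p.1 p.2) (Ici 0 ×ˢ Ici 0) ∧
    (∀ t : ℝ, 0 ≤ t → StrictMonoOn (fun s => σ s t) (Ici 0) ∧ σ 0 t = 0) ∧
    (∀ s : ℝ, 0 ≤ s → AntitoneOn (σ s) (Ici 0) ∧ Tendsto (σ s) atTop (nhds 0)) :=
  KL_majorant_construction_general σ' hnonneg hmono hanti hzero hcont0 hdecay σe hσe σ hσ hσ0
end
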